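/- arXiv:1507.05703 — 7 statements merged into one kernel-verified Lean document; each statement's English description precedes it below -/
import Mathlib

section
/- Let A and B be real symmetric n×n matrices with A invertible. Then A and B are simultaneously diagonalizable via congruence if and only if A⁻¹B is diagonalizable over ℝ (i.e., similar to a real diagonal matrix). -/
/-!
Both directions rest on the identity `P⁻¹ (A⁻¹ B) P = (Pᵀ A P)⁻¹ (Pᵀ B P)` for invertible `P`.
If `Pᵀ A P` and `Pᵀ B P` are diagonal, so is the right-hand side. Conversely, if
`Q⁻¹ (A⁻¹ B) Q = D` is diagonal, then `S := Qᵀ A Q` satisfies `Qᵀ B Q = S D`; since `S` and `S D`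
are symmetric, `S` commutes with `D`, so an orthogonal `U` diagonalizes `S` and `D` simultaneously
and `P := Q U` diagonalizes `A` and `B` by congruence.
-/

open Module.End in
theorem LinearMap.IsSymmetric.exists_orthonormalBasis_apply_eq_smul_of_commute
    {𝕜 E ι : Type*} [RCLike 𝕜] [NormedAddCommGroup E] [InnerProductSpace 𝕜 E]
    [FiniteDimensional 𝕜 E] [Fintype ι] {S T : E →ₗ[𝕜] E} (hS : S.IsSymmetric)
    (hT : T.IsSymmetric) (hST : Commute S T) (hι : Module.finrank 𝕜 E = Fintype.card ι) :
    ∃ (b : OrthonormalBasis ι 𝕜 E) (μ ν : ι → 𝕜),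
      ∀ i, S (b i) = μ i • b i ∧ T (b i) = ν i • b i := by
  set V : 𝕜 × 𝕜 → Submodule 𝕜 E := fun p => eigenspace S p.2 ⊓ eigenspace T p.1
  have hV : DirectSum.IsInternal V := hS.directSum_isInternal_of_commute hT hST
  have hV' : DirectSum.IsInternal (fun p : {p // V p ≠ ⊥} => V p) :=
    DirectSum.isInternal_ne_bot_iff.mpr hV
  have : Fintype {p // V p ≠ ⊥} :=
    (WellFoundedGT.finite_ne_bot_of_iSupIndep hV.submodule_iSupIndep).fintype
  have hVorth : OrthogonalFamily 𝕜 (fun p : {p // V p ≠ ⊥} => V p) (fun p => (V p).subtypeₗᵢ) :=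
    (hS.orthogonalFamily_eigenspace_inf_eigenspace hT).comp Subtype.val_injective
  let e := Fintype.equivFinOfCardEq hι.symm
  refine ⟨(hV'.subordinateOrthonormalBasis rfl hVorth).reindex e.symm,
    fun i => (hV'.subordinateOrthonormalBasisIndex rfl (e i) hVorth).1.2,
    fun i => (hV'.subordinateOrthonormalBasisIndex rfl (e i) hVorth).1.1, fun i => ?_⟩
  have hmem := hV'.subordinateOrthonormalBasis_subordinate rfl (e i) hVorth
  rw [OrthonormalBasis.reindex_apply, Equiv.symm_symm]
  exact ⟨mem_eigenspace_iff.mp hmem.1, mem_eigenspace_iff.mp hmem.2⟩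

namespace Matrix

section Semiring

variable {R m : Type*} [Fintype m]

theorem IsSymm.transpose_mul_mul [CommSemiring R] {A : Matrix m m R} (hA : A.IsSymm)
    (P : Matrix m m R) : (Pᵀ * A * P).IsSymm := by
  simp only [IsSymm, transpose_mul, transpose_transpose, hA.eq, Matrix.mul_assoc]

theorem IsSymm.commute_of_isSymm_mul [CommSemiring R] {S D : Matrix m m R} (hS : S.IsSymm)
    (hD : D.IsSymm) (hSD : (S * D).IsSymm) : Commute S D := by
  rw [Commute, SemiconjBy, ← hSD.eq, transpose_mul, hS.eq, hD.eq]

variable [DecidableEq m]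

theorem IsDiag.mul [CommSemiring R] {D E : Matrix m m R} (hD : D.IsDiag) (hE : E.IsDiag) :
    (D * E).IsDiag := by
  rw [← hD.diagonal_diag, ← hE.diagonal_diag, diagonal_mul_diagonal]
  exact isDiag_diagonal _

theorem IsDiag.inv [CommRing R] {D : Matrix m m R} (hD : D.IsDiag) : D⁻¹.IsDiag := by
  rw [← hD.diagonal_diag, inv_diagonal]
  exact isDiag_diagonal _

theorem inv_mul_inv_mul_mul_eq [CommRing R] {P : Matrix m m R} (hP : IsUnit P)
    (A B : Matrix m m R) : P⁻¹ * (A⁻¹ * B) * P = (Pᵀ * A * P)⁻¹ * (Pᵀ * B * P) := by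
  have hPt : IsUnit Pᵀ.det := by rw [det_transpose]; exact (isUnit_iff_isUnit_det P).mp hP
  simp only [Matrix.mul_inv_rev, Matrix.mul_assoc, nonsing_inv_mul_cancel_left _ _ hPt]

end Semiring

variable {𝕜 m : Type*} [RCLike 𝕜] [Fintype m] [DecidableEq m]

theorem star_toMatrix_mul_mul_toMatrix_eq_diagonal
    (b : OrthonormalBasis m 𝕜 (EuclideanSpace 𝕜 m)) {M : Matrix m m 𝕜} {w : m → 𝕜}
    (hM : ∀ j, M *ᵥ b j = w j • b j) :
    star ((EuclideanSpace.basisFun m 𝕜).toBasis.toMatrix b) * M *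
      (EuclideanSpace.basisFun m 𝕜).toBasis.toMatrix b = diagonal w := by
  set U := (EuclideanSpace.basisFun m 𝕜).toBasis.toMatrix b
  have hU : star U * U = 1 := mem_unitaryGroup_iff'.mp
    ((EuclideanSpace.basisFun m 𝕜).toMatrix_orthonormalBasis_mem_unitary b)
  have hMU : M * U = U * diagonal w := by
    ext i j
    rw [mul_diagonal]
    simpa [U, Module.Basis.toMatrix_apply, mul_comm, mul_apply, mulVec, dotProduct]
      using congrFun (hM j) i
  rw [Matrix.mul_assoc, hMU, ← Matrix.mul_assoc, hU, Matrix.one_mul]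

theorem IsHermitian.exists_unitary_isDiag_of_commute {S T : Matrix m m 𝕜} (hS : S.IsHermitian)
    (hT : T.IsHermitian) (hST : Commute S T) :
    ∃ U ∈ unitaryGroup m 𝕜, (star U * S * U).IsDiag ∧ (star U * T * U).IsDiag := by
  obtain ⟨b, μ, ν, hb⟩ :=
    (isSymmetric_toEuclideanLin_iff.mpr hS).exists_orthonormalBasis_apply_eq_smul_of_commute
      (isSymmetric_toEuclideanLin_iff.mpr hT) (hST.map (toLpLinAlgEquiv 2)) finrank_euclideanSpace
  refine ⟨_, (EuclideanSpace.basisFun m 𝕜).toMatrix_orthonormalBasis_mem_unitary b, ?_, ?_⟩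
  · rw [star_toMatrix_mul_mul_toMatrix_eq_diagonal b (w := μ) fun j => ?_]
    · exact isDiag_diagonal μ
    · simpa using congrArg WithLp.ofLp (hb j).1
  · rw [star_toMatrix_mul_mul_toMatrix_eq_diagonal b (w := ν) fun j => ?_]
    · exact isDiag_diagonal ν
    · simpa using congrArg WithLp.ofLp (hb j).2

theorem IsSymm.exists_isUnit_isDiag_of_isSymm_mul {S D : Matrix m m ℝ} (hS : S.IsSymm)
    (hD : D.IsSymm) (hSD : (S * D).IsSymm) :
    ∃ U : Matrix m m ℝ, IsUnit U ∧ (Uᵀ * S * U).IsDiag ∧ (Uᵀ * (S * D) * U).IsDiag := by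
  obtain ⟨U, hU, hUS, hUD⟩ := (isHermitian_iff_isSymm.mpr hS).exists_unitary_isDiag_of_commute
    (isHermitian_iff_isSymm.mpr hD) (hS.commute_of_isSymm_mul hD hSD)
  have hUt : star U = Uᵀ := by rw [star_eq_conjTranspose, conjTranspose_eq_transpose_of_trivial]
  have hUUt : U * Uᵀ = 1 := hUt ▸ mem_unitaryGroup_iff.mp hU
  rw [hUt] at hUS hUD
  refine ⟨U, Unitary.isUnit_coe (U := ⟨U, hU⟩), hUS, ?_⟩
  have hsplit : Uᵀ * (S * D) * U = (Uᵀ * S * U) * (Uᵀ * D * U) := calc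
    Uᵀ * (S * D) * U = Uᵀ * S * (U * Uᵀ) * D * U := by
      rw [hUUt]; simp only [Matrix.mul_one, Matrix.mul_assoc]
    _ = (Uᵀ * S * U) * (Uᵀ * D * U) := by simp only [Matrix.mul_assoc]
  exact hsplit ▸ hUS.mul hUD

end Matrix

open Matrix

theorem stmt_1 (n : ℕ) (A B : Matrix (Fin n) (Fin n) ℝ)
    (hA : A.IsSymm) (hB : B.IsSymm) (hAinv : IsUnit A) :
    (∃ P : Matrix (Fin n) (Fin n) ℝ, IsUnit P ∧
        (Pᵀ * A * P).IsDiag ∧ (Pᵀ * B * P).IsDiag) ↔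
      (∃ (Q D : Matrix (Fin n) (Fin n) ℝ), IsUnit Q ∧ D.IsDiag ∧
        Q⁻¹ * (A⁻¹ * B) * Q = D) := by
  constructor
  · rintro ⟨P, hP, hAP, hBP⟩
    exact ⟨P, _, hP, hAP.inv.mul hBP, inv_mul_inv_mul_mul_eq hP A B⟩
  · rintro ⟨Q, D, hQ, hD, hQD⟩
    set S := Qᵀ * A * Q
    have hSunit : IsUnit S := (((isUnit_transpose Q).mpr hQ).mul hAinv).mul hQ
    have hBQ : Qᵀ * B * Q = S * D := by
      rw [← hQD, inv_mul_inv_mul_mul_eq hQ,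
        mul_nonsing_inv_cancel_left _ _ ((isUnit_iff_isUnit_det S).mp hSunit)]
    obtain ⟨U, hU, hUS, hUSD⟩ := (hA.transpose_mul_mul Q).exists_isUnit_isDiag_of_isSymm_mul
      hD.isSymm (hBQ ▸ hB.transpose_mul_mul Q)
    refine ⟨Q * U, hQ.mul hU, ?_, ?_⟩
    · simpa only [S, transpose_mul, Matrix.mul_assoc] using hUS
    · rw [← hBQ] at hUSD
      simpa only [transpose_mul, Matrix.mul_assoc] using hUSD
end

section
/- Let K be a Jordan matrix in block-diagonal form K = diag(C(λ₁), ..., C(λₖ)) where each C(λᵢ) collects all Jordan blocks for the eigenvalue λᵢ, and the λᵢ are pairwise distinct. If S is a real symmetric matrix such that SK is symmetric, then S is block diagonal, S = diag(S₁, ..., Sₖ), with each block Sᵢ having the same size as C(λᵢ). -/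
open Matrix

lemma stmt_2_rowsum (k : ℕ) (c : Fin k → ℕ) (lam : Fin k → ℝ)
    (eps : (i : Fin k) → ℕ → ℝ)
    (K : Matrix ((i : Fin k) × Fin (c i)) ((i : Fin k) × Fin (c i)) ℝ)
    (hK : ∀ (i j : Fin k) (a : Fin (c i)) (b : Fin (c j)),
      K ⟨i, a⟩ ⟨j, b⟩ =
        if i = j then
          (if (a : ℕ) = (b : ℕ) then lam i
           else if (a : ℕ) + 1 = (b : ℕ) then eps i (a : ℕ) else 0)
        else 0)
    (S : Matrix ((i : Fin k) × Fin (c i)) ((i : Fin k) × Fin (c i)) ℝ)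
    (r : (i : Fin k) × Fin (c i)) (j : Fin k) (b : Fin (c j)) :
    (S * K) r ⟨j, b⟩ = lam j * S r ⟨j, b⟩ +
      ∑ c' : Fin (c j), (if (c' : ℕ) + 1 = (b : ℕ) then eps j (c' : ℕ) * S r ⟨j, c'⟩ else 0) := by
  rw [Matrix.mul_apply, ← Finset.univ_sigma_univ, Finset.sum_sigma]
  rw [Finset.sum_eq_single j]
  · rw [Finset.sum_congr rfl (fun c' _ => by rw [hK, if_pos rfl])]
    have : ∀ c' : Fin (c j), S r ⟨j, c'⟩ *
        (if (c' : ℕ) = (b : ℕ) then lam j else if (c' : ℕ) + 1 = (b : ℕ) then eps j (c' : ℕ) else 0)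
        = (if c' = b then lam j * S r ⟨j, c'⟩ else 0)
          + (if (c' : ℕ) + 1 = (b : ℕ) then eps j (c' : ℕ) * S r ⟨j, c'⟩ else 0) := by
      intro c'
      rcases eq_or_ne c' b with h | h
      · subst h; simp [mul_comm]
      · rw [if_neg h, if_neg (fun hc => h (Fin.ext hc)), zero_add]
        split <;> ring
    rw [Finset.sum_congr rfl (fun c' _ => this c'), Finset.sum_add_distrib,
      Finset.sum_ite_eq' Finset.univ b, if_pos (Finset.mem_univ b)]
  · intro l _ hl
    apply Finset.sum_eq_zero
    intro c' _
    rw [hK, if_neg hl, mul_zero]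
  · simp

/-- if `K` is a Jordan matrix `diag(C(λ₁), …, C(λₖ))` (each `C(λᵢ)` a
block-diagonal collection of Jordan blocks with eigenvalue `λᵢ`, so an upper-bidiagonal
matrix with `λᵢ` on the diagonal and entries `ε ∈ {0,1}` on the superdiagonal), the `λᵢ`
pairwise distinct, and `S` is symmetric with `S * K` symmetric, then `S` is block
diagonal conformally with `K`. -/
theorem stmt_2 (k : ℕ) (c : Fin k → ℕ) (lam : Fin k → ℝ)
    (hlam : Function.Injective lam)
    (eps : (i : Fin k) → ℕ → ℝ) (heps : ∀ i a, eps i a = 0 ∨ eps i a = 1)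
    (K : Matrix ((i : Fin k) × Fin (c i)) ((i : Fin k) × Fin (c i)) ℝ)
    (hK : ∀ (i j : Fin k) (a : Fin (c i)) (b : Fin (c j)),
      K ⟨i, a⟩ ⟨j, b⟩ =
        if i = j then
          (if (a : ℕ) = (b : ℕ) then lam i
           else if (a : ℕ) + 1 = (b : ℕ) then eps i (a : ℕ) else 0)
        else 0)
    (S : Matrix ((i : Fin k) × Fin (c i)) ((i : Fin k) × Fin (c i)) ℝ)
    (hS : S.IsSymm) (hSK : (S * K).IsSymm) :
    ∀ (i j : Fin k) (a : Fin (c i)) (b : Fin (c j)), i ≠ j → S ⟨i, a⟩ ⟨j, b⟩ = 0 := by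
  have main : ∀ n (i j : Fin k) (a : Fin (c i)) (b : Fin (c j)),
      (a : ℕ) + (b : ℕ) = n → i ≠ j → S ⟨i, a⟩ ⟨j, b⟩ = 0 := by
    intro n
    induction n using Nat.strong_induction_on with
    | _ n IH =>
      intro i j a b hn hij
      have h1 := stmt_2_rowsum k c lam eps K hK S ⟨i, a⟩ j b
      have h2 := stmt_2_rowsum k c lam eps K hK S ⟨j, b⟩ i a
      have hsym : (S * K) ⟨j, b⟩ ⟨i, a⟩ = (S * K) ⟨i, a⟩ ⟨j, b⟩ := hSK.apply _ _
      have z1 : ∑ c' : Fin (c j),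
          (if (c' : ℕ) + 1 = (b : ℕ) then eps j (c' : ℕ) * S ⟨i, a⟩ ⟨j, c'⟩ else 0) = 0 := by
        apply Finset.sum_eq_zero
        intro c' _
        split
        · rename_i h
          rw [IH ((a : ℕ) + (c' : ℕ)) (by omega) i j a c' rfl hij, mul_zero]
        · rfl
      have z2 : ∑ c' : Fin (c i),
          (if (c' : ℕ) + 1 = (a : ℕ) then eps i (c' : ℕ) * S ⟨j, b⟩ ⟨i, c'⟩ else 0) = 0 := by
        apply Finset.sum_eq_zero
        intro c' _
        split
        · rename_i h
          have : S ⟨j, b⟩ ⟨i, c'⟩ = S ⟨i, c'⟩ ⟨j, b⟩ := hS.apply _ _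
          rw [this, IH ((c' : ℕ) + (b : ℕ)) (by omega) i j c' b rfl hij, mul_zero]
        · rfl
      have hSsym : S ⟨j, b⟩ ⟨i, a⟩ = S ⟨i, a⟩ ⟨j, b⟩ := hS.apply _ _
      rw [h1, h2, z1, z2, add_zero, add_zero, hSsym] at hsym
      have hne : lam i - lam j ≠ 0 := sub_ne_zero_of_ne (fun h => hij (hlam h))
      have : (lam i - lam j) * S ⟨i, a⟩ ⟨j, b⟩ = 0 := by linarith [hsym]
      exact (mul_eq_zero.1 this).resolve_left hne
  intro i j a b hij
  exact main ((a : ℕ) + (b : ℕ)) i j a b rfl hij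
end

section
/- Let A₁ and B₁ be p×p real symmetric matrices and B₂ a q×q real matrix, with A₁ and B₂ nonsingular diagonal and B₁ nonsingular. Then A₁ and B₁ are simultaneously diagonalizable via congruence if and only if A := diag(A₁, 0_q) and B := diag(B₁, B₂) are simultaneously diagonalizable via congruence. -/
/-!
Let `P` diagonalize `A = diag(A₁, 0)` and `B = diag(B₁, B₂)` by congruence. Since `PᵀAP` has the
rank `p` of `A`, its diagonal has exactly `p` nonzero entries, and after permuting the columns of
`P` they come first. In block form `P = [[P₁₁, P₁₂], [P₂₁, P₂₂]]` the upper left block of `PᵀAP`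
is then the invertible matrix `P₁₁ᵀA₁P₁₁`, so `P₁₁` is invertible, and the vanishing upper right
block `P₁₁ᵀA₁P₁₂` forces `P₁₂ = 0`. Now `P` is block lower triangular, so `P₂₂` is invertible, and
the upper right block `P₂₁ᵀB₂P₂₂` of `PᵀBP` vanishes, whence `P₂₁ = 0`. So `P₁₁` diagonalizes `A₁`
and `B₁`. Conversely `diag(P₁, 1)` works.
-/

open Matrix

theorem exists_sum_equiv_of_card_subtype {ι m n : Type*} [Fintype ι] [Fintype m]
    [Fintype n] (P : ι → Prop) [DecidablePred P] (hP : Fintype.card {i // P i} = Fintype.card m)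
    (hι : Fintype.card ι = Fintype.card m + Fintype.card n) :
    ∃ e : m ⊕ n ≃ ι, (∀ i, P (e (.inl i))) ∧ ∀ j, ¬ P (e (.inr j)) := by
  have hnP : Fintype.card {i // ¬ P i} = Fintype.card n := by
    rw [Fintype.card_subtype_compl, hP, hι]
    omega
  exact ⟨((Fintype.equivOfCardEq hP.symm).sumCongr (Fintype.equivOfCardEq hnP.symm)).trans
    (Equiv.sumCompl P), fun i => (Fintype.equivOfCardEq hP.symm i).2,
    fun j => (Fintype.equivOfCardEq hnP.symm j).2⟩

namespace Matrix

def SimulCongrDiagonalizable {ι R : Type*} [Fintype ι] [DecidableEq ι] [Semiring R]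
    (M N : Matrix ι ι R) : Prop :=
  ∃ P : Matrix ι ι R, IsUnit P ∧ (Pᵀ * M * P).IsDiag ∧ (Pᵀ * N * P).IsDiag

section Blocks

variable {m n α : Type*}

theorem IsDiag.toBlocks₁₁ [Zero α] {M : Matrix (m ⊕ n) (m ⊕ n) α} (h : M.IsDiag) :
    M.toBlocks₁₁.IsDiag :=
  (isDiag_fromBlocks_iff.mp (by rwa [fromBlocks_toBlocks])).1

theorem IsDiag.toBlocks₁₂ [Zero α] {M : Matrix (m ⊕ n) (m ⊕ n) α} (h : M.IsDiag) :
    M.toBlocks₁₂ = 0 :=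
  (isDiag_fromBlocks_iff.mp (by rwa [fromBlocks_toBlocks])).2.1

variable [Fintype m] [Fintype n]

section Semiring

variable [Semiring α]

theorem transpose_fromBlocks_mul_fromBlocks_mul_fromBlocks (P₁ M₁ : Matrix m m α)
    (P₂ M₂ : Matrix n n α) :
    (fromBlocks P₁ 0 0 P₂)ᵀ * fromBlocks M₁ 0 0 M₂ * fromBlocks P₁ 0 0 P₂ =
      fromBlocks (P₁ᵀ * M₁ * P₁) 0 0 (P₂ᵀ * M₂ * P₂) := by
  simp [fromBlocks_transpose, fromBlocks_multiply]

theorem toBlocks₁₁_transpose_mul_fromBlocks_mul (Q : Matrix (m ⊕ n) (m ⊕ n) α)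
    (M₁ : Matrix m m α) (M₂ : Matrix n n α) :
    (Qᵀ * fromBlocks M₁ 0 0 M₂ * Q).toBlocks₁₁ =
      Q.toBlocks₁₁ᵀ * M₁ * Q.toBlocks₁₁ + Q.toBlocks₂₁ᵀ * M₂ * Q.toBlocks₂₁ := by
  conv_lhs => rw [← fromBlocks_toBlocks Q]
  simp [fromBlocks_transpose, fromBlocks_multiply, Matrix.mul_assoc]

theorem toBlocks₁₂_transpose_mul_fromBlocks_mul (Q : Matrix (m ⊕ n) (m ⊕ n) α)
    (M₁ : Matrix m m α) (M₂ : Matrix n n α) :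
    (Qᵀ * fromBlocks M₁ 0 0 M₂ * Q).toBlocks₁₂ =
      Q.toBlocks₁₁ᵀ * M₁ * Q.toBlocks₁₂ + Q.toBlocks₂₁ᵀ * M₂ * Q.toBlocks₂₂ := by
  conv_lhs => rw [← fromBlocks_toBlocks Q]
  simp [fromBlocks_transpose, fromBlocks_multiply, Matrix.mul_assoc]

end Semiring

variable [CommRing α] [DecidableEq m]

theorem toBlocks₁₂_eq_zero_of_isUnit_toBlocks₁₁ {Q : Matrix (m ⊕ n) (m ⊕ n) α}
    {A₁ : Matrix m m α} (h₁₁ : IsUnit (Qᵀ * fromBlocks A₁ 0 0 0 * Q).toBlocks₁₁)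
    (h₁₂ : (Qᵀ * fromBlocks A₁ 0 0 0 * Q).toBlocks₁₂ = 0) :
    IsUnit Q.toBlocks₁₁ ∧ Q.toBlocks₁₂ = 0 := by
  rw [toBlocks₁₁_transpose_mul_fromBlocks_mul] at h₁₁
  rw [toBlocks₁₂_transpose_mul_fromBlocks_mul] at h₁₂
  simp only [Matrix.mul_zero, Matrix.zero_mul, add_zero] at h₁₁ h₁₂
  have hA := (isUnit_iff_isUnit_det _).mp (isUnit_of_mul_isUnit_left h₁₁)
  refine ⟨isUnit_of_mul_isUnit_right h₁₁, ?_⟩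
  rw [← nonsing_inv_mul_cancel_left _ Q.toBlocks₁₂ hA, h₁₂, Matrix.mul_zero]

variable [DecidableEq n]

theorem toBlocks₂₁_eq_zero_of_toBlocks₁₂_eq_zero {Q : Matrix (m ⊕ n) (m ⊕ n) α}
    (hQ : IsUnit Q) (hQ₁₂ : Q.toBlocks₁₂ = 0) {B₁ : Matrix m m α} {B₂ : Matrix n n α}
    (hB₂ : IsUnit B₂) (h₁₂ : (Qᵀ * fromBlocks B₁ 0 0 B₂ * Q).toBlocks₁₂ = 0) :
    Q.toBlocks₂₁ = 0 := by
  have hQ₂₂ : IsUnit Q.toBlocks₂₂ := by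
    rw [← fromBlocks_toBlocks Q, hQ₁₂, isUnit_iff_isUnit_det, det_fromBlocks_zero₁₂] at hQ
    exact (isUnit_iff_isUnit_det _).mpr (isUnit_of_mul_isUnit_right hQ)
  rw [toBlocks₁₂_transpose_mul_fromBlocks_mul, hQ₁₂, Matrix.mul_zero, zero_add,
    Matrix.mul_assoc] at h₁₂
  have hB := (isUnit_iff_isUnit_det _).mp (hB₂.mul hQ₂₂)
  rw [← transpose_eq_zero, ← mul_nonsing_inv_cancel_right _ Q.toBlocks₂₁ᵀ hB, h₁₂,
    Matrix.zero_mul]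

theorem rank_fromBlocks_zero_of_isUnit {K : Type*} [Field K] {A : Matrix m m K} (hA : IsUnit A) :
    (fromBlocks A 0 0 (0 : Matrix n n K)).rank = Fintype.card m := by
  classical
  have hsplit : fromBlocks A 0 0 (0 : Matrix n n K) =
      fromBlocks A 0 0 1 * diagonal (Sum.elim 1 0) := by
    simp [← fromBlocks_diagonal, fromBlocks_multiply]
  have hunit : IsUnit (fromBlocks A 0 0 (1 : Matrix n n K)).det := by
    simpa [det_fromBlocks_zero₂₁] using (isUnit_iff_isUnit_det A).mp hA
  rw [hsplit, rank_mul_eq_right_of_isUnit_det _ _ hunit, rank_diagonal]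
  simp [Fintype.card_congr Equiv.subtypeSum]

end Blocks

theorem transpose_submatrix_mul_mul_submatrix {ι κ α : Type*} [Fintype ι] [Semiring α]
    (P M : Matrix ι ι α) (e : κ ≃ ι) :
    (P.submatrix id e)ᵀ * M * P.submatrix id e = (Pᵀ * M * P).submatrix e e := by
  ext i j
  simp [mul_apply]

namespace SimulCongrDiagonalizable

variable {m n : Type*} [Fintype m] [Fintype n] [DecidableEq m] [DecidableEq n]

theorem zero_left {R : Type*} [CommRing R] {M : Matrix n n R} (hM : M.IsDiag) :
    SimulCongrDiagonalizable 0 M :=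
  ⟨1, isUnit_one, by simp [isDiag_zero], by simpa using hM⟩

theorem fromBlocks {R : Type*} [CommRing R] {A₁ B₁ : Matrix m m R} {A₂ B₂ : Matrix n n R}
    (h₁ : SimulCongrDiagonalizable A₁ B₁) (h₂ : SimulCongrDiagonalizable A₂ B₂) :
    SimulCongrDiagonalizable (Matrix.fromBlocks A₁ 0 0 A₂) (Matrix.fromBlocks B₁ 0 0 B₂) := by
  obtain ⟨P₁, hP₁, hA₁, hB₁⟩ := h₁
  obtain ⟨P₂, hP₂, hA₂, hB₂⟩ := h₂
  refine ⟨Matrix.fromBlocks P₁ 0 0 P₂, ?_, ?_, ?_⟩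
  · simp only [isUnit_iff_isUnit_det, det_fromBlocks_zero₂₁] at hP₁ hP₂ ⊢
    exact hP₁.mul hP₂
  · rw [transpose_fromBlocks_mul_fromBlocks_mul_fromBlocks]
    exact hA₁.fromBlocks hA₂
  · rw [transpose_fromBlocks_mul_fromBlocks_mul_fromBlocks]
    exact hB₁.fromBlocks hB₂

theorem of_fromBlocks {K : Type*} [Field K] {A₁ B₁ : Matrix m m K} {B₂ : Matrix n n K}
    (hA₁ : IsUnit A₁) (hB₂ : IsUnit B₂)
    (h : SimulCongrDiagonalizable (Matrix.fromBlocks A₁ 0 0 0) (Matrix.fromBlocks B₁ 0 0 B₂)) :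
    SimulCongrDiagonalizable A₁ B₁ := by
  classical
  obtain ⟨P, hP, hPA, hPB⟩ := h
  set d := (Pᵀ * Matrix.fromBlocks A₁ 0 0 0 * P).diag
  have hcard : Fintype.card {i // d i ≠ 0} = Fintype.card m := by
    rw [← rank_diagonal, hPA.diagonal_diag, Matrix.mul_assoc,
      rank_mul_eq_right_of_isUnit_det _ _ (by rwa [det_transpose, ← isUnit_iff_isUnit_det]),
      rank_mul_eq_left_of_isUnit_det _ _ ((isUnit_iff_isUnit_det P).mp hP),
      rank_fromBlocks_zero_of_isUnit hA₁]
  obtain ⟨e, hd, -⟩ := exists_sum_equiv_of_card_subtype (d · ≠ 0) hcard Fintype.card_sum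
  set Q := P.submatrix id e
  have hQ : IsUnit Q := (isUnit_submatrix_equiv (Equiv.refl _) e).mpr hP
  have hQA : Qᵀ * Matrix.fromBlocks A₁ 0 0 0 * Q = diagonal (d ∘ e) := by
    rw [transpose_submatrix_mul_mul_submatrix, ← hPA.diagonal_diag, submatrix_diagonal_equiv]
  have hQAd : (Qᵀ * Matrix.fromBlocks A₁ 0 0 0 * Q).IsDiag := hQA ▸ isDiag_diagonal _
  have hQB : (Qᵀ * Matrix.fromBlocks B₁ 0 0 B₂ * Q).IsDiag := by
    rw [transpose_submatrix_mul_mul_submatrix]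
    exact hPB.submatrix e.injective
  have hQA₁₁ : IsUnit (Qᵀ * Matrix.fromBlocks A₁ 0 0 0 * Q).toBlocks₁₁ := by
    simpa [hQA, isUnit_diagonal, Pi.isUnit_iff] using hd
  obtain ⟨hQ₁₁, hQ₁₂⟩ := toBlocks₁₂_eq_zero_of_isUnit_toBlocks₁₁ hQA₁₁ hQAd.toBlocks₁₂
  have hQ₂₁ := toBlocks₂₁_eq_zero_of_toBlocks₁₂_eq_zero hQ hQ₁₂ hB₂ hQB.toBlocks₁₂
  refine ⟨Q.toBlocks₁₁, hQ₁₁, ?_, ?_⟩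
  · simpa [toBlocks₁₁_transpose_mul_fromBlocks_mul] using hQAd.toBlocks₁₁
  · simpa [toBlocks₁₁_transpose_mul_fromBlocks_mul, hQ₂₁] using hQB.toBlocks₁₁

end SimulCongrDiagonalizable

end Matrix

theorem stmt_4_general (p q : ℕ)
    (A₁ B₁ : Matrix (Fin p) (Fin p) ℝ) (B₂ : Matrix (Fin q) (Fin q) ℝ)
    (hA₁ : IsUnit A₁)
    (hB₂d : B₂.IsDiag) (hB₂ : IsUnit B₂) :
    (∃ P : Matrix (Fin p) (Fin p) ℝ, IsUnit P ∧
        (Pᵀ * A₁ * P).IsDiag ∧ (Pᵀ * B₁ * P).IsDiag) ↔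
      (∃ P : Matrix (Fin p ⊕ Fin q) (Fin p ⊕ Fin q) ℝ, IsUnit P ∧
        (Pᵀ * fromBlocks A₁ 0 0 0 * P).IsDiag ∧
        (Pᵀ * fromBlocks B₁ 0 0 B₂ * P).IsDiag) :=
  ⟨fun h => SimulCongrDiagonalizable.fromBlocks h (.zero_left hB₂d),
    SimulCongrDiagonalizable.of_fromBlocks hA₁ hB₂⟩

theorem stmt_4 (p q : ℕ)
    (A₁ B₁ : Matrix (Fin p) (Fin p) ℝ) (B₂ : Matrix (Fin q) (Fin q) ℝ)
    (hA₁s : A₁.IsSymm) (hB₁s : B₁.IsSymm)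
    (hA₁d : A₁.IsDiag) (hA₁ : IsUnit A₁)
    (hB₂d : B₂.IsDiag) (hB₂ : IsUnit B₂)
    (hB₁ : IsUnit B₁) :
    (∃ P : Matrix (Fin p) (Fin p) ℝ, IsUnit P ∧
        (Pᵀ * A₁ * P).IsDiag ∧ (Pᵀ * B₁ * P).IsDiag) ↔
      (∃ P : Matrix (Fin p ⊕ Fin q) (Fin p ⊕ Fin q) ℝ, IsUnit P ∧
        (Pᵀ * fromBlocks A₁ 0 0 0 * P).IsDiag ∧
        (Pᵀ * fromBlocks B₁ 0 0 B₂ * P).IsDiag) :=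
  stmt_4_general p q A₁ B₁ B₂ hA₁ hB₂d hB₂
end

section
/- For any two n×n singular real symmetric matrices A and B, there exists an invertible real matrix U such that UᵀAU = diag(A₁, 0_{n-p}) with A₁ a p×p nonsingular diagonal matrix, and UᵀBU has the block form [[𝓑₁, 0, 𝓑₂],[0, 𝓑₃, 0],[𝓑₂ᵀ, 0, 0]] where 𝓑₁ is p×p, 𝓑₃ is a q×q nonsingular diagonal matrix, 𝓑₂ is p×r, and p + q + r = n (with p, q, r ≥ 0). -/
/-!
Diagonalize `A` by an orthogonal congruence, listing the nonzero eigenvalues first, so that `A`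
becomes `diag(A₁, 0)`. Every congruence by a matrix `[[1, 0], [X, V]]` fixes `diag(A₁, 0)`, and
this freedom is spent on `B`: `V` diagonalizes the lower right block of `B` as `diag(B₃, 0)`, and
then `X` uses the invertible `B₃` to clear the columns of the off-diagonal block that face `B₃`.
-/

open Matrix

variable {ι κ α β γ R : Type*}

theorem Matrix.submatrix_transpose_mul_mul_equiv [Fintype ι] [Fintype κ] [AddCommMonoid R]
    [Mul R] (P M : Matrix ι ι R) (e : κ ≃ ι) :
    (Pᵀ * M * P).submatrix e e = (P.submatrix e e)ᵀ * M.submatrix e e * P.submatrix e e := by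
  rw [transpose_submatrix, submatrix_mul_equiv _ _ _ e, submatrix_mul_equiv _ _ _ e]

theorem Matrix.IsSymm.transpose_mul_mul_s5 [Fintype ι] [CommSemiring R] {M : Matrix ι ι R}
    (hM : M.IsSymm) (P : Matrix ι ι R) : (Pᵀ * M * P).IsSymm := by
  rw [IsSymm, transpose_mul, transpose_mul, transpose_transpose, hM.eq, Matrix.mul_assoc]

theorem Matrix.exists_equiv_submatrix_diagonal_eq_fromBlocks [Fintype ι] [DecidableEq ι] [Zero R]
    (d : ι → R) :
    ∃ (q r : ℕ) (e : ι ≃ Fin q ⊕ Fin r) (d' : Fin q → R), (∀ i, d' i ≠ 0) ∧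
      (diagonal d).submatrix e.symm e.symm = fromBlocks (diagonal d') 0 0 0 := by
  classical
  let e : ι ≃ Fin _ ⊕ Fin _ := (Equiv.sumCompl (d · ≠ 0)).symm.trans
    (Equiv.sumCongr (Fintype.equivFin _) (Fintype.equivFin _))
  have hd : d ∘ e.symm = (d ∘ e.symm ∘ Sum.inl) ⊕ᵥ 0 := by
    ext (i | i)
    · rfl
    · simpa [e] using ((Fintype.equivFin _).symm i).2
  refine ⟨_, _, e, d ∘ e.symm ∘ Sum.inl, fun i => ((Fintype.equivFin _).symm i).2, ?_⟩
  rw [submatrix_diagonal_equiv, hd, ← fromBlocks_diagonal, Pi.zero_def, diagonal_zero]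

theorem Matrix.IsSymm.exists_isUnit_transpose_mul_mul_eq_diagonal [Fintype ι] [DecidableEq ι]
    {S : Matrix ι ι ℝ} (hS : S.IsSymm) :
    ∃ V : Matrix ι ι ℝ, IsUnit V ∧ ∃ d : ι → ℝ, Vᵀ * S * V = diagonal d := by
  have hdiag := (isHermitian_iff_isSymm.mpr hS).conjStarAlgAut_star_eigenvectorUnitary
  simp only [Unitary.conjStarAlgAut_apply, Unitary.coe_star, star_eq_conjTranspose,
    conjTranspose_eq_transpose_of_trivial] at hdiag
  exact ⟨_, Unitary.isUnit_coe, _, hdiag⟩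

theorem Matrix.IsSymm.exists_transpose_mul_submatrix_mul_eq_fromBlocks [Fintype ι]
    [DecidableEq ι] {S : Matrix ι ι ℝ} (hS : S.IsSymm) :
    ∃ (q r : ℕ) (e : ι ≃ Fin q ⊕ Fin r) (V : Matrix (Fin q ⊕ Fin r) (Fin q ⊕ Fin r) ℝ)
      (D : Matrix (Fin q) (Fin q) ℝ), IsUnit V ∧ D.IsDiag ∧ IsUnit D ∧
        Vᵀ * S.submatrix e.symm e.symm * V = Matrix.fromBlocks D 0 0 0 := by
  obtain ⟨V, hV, d, hVd⟩ := hS.exists_isUnit_transpose_mul_mul_eq_diagonal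
  obtain ⟨q, r, e, d', hd', hd⟩ := exists_equiv_submatrix_diagonal_eq_fromBlocks d
  refine ⟨q, r, e, V.submatrix e.symm e.symm, diagonal d', (isUnit_submatrix_equiv _ _).mpr hV,
    isDiag_diagonal d', isUnit_diagonal.mpr (Pi.isUnit_iff.mpr fun i => (hd' i).isUnit), ?_⟩
  rw [← submatrix_transpose_mul_mul_equiv, hVd, hd]

theorem Matrix.add_transpose_mul_fromBlocks_eq_fromCols_zero [Fintype β] [Fintype γ]
    [CommRing R] [DecidableEq β] (C : Matrix α (β ⊕ γ) R) {D : Matrix β β R} (hD : D.IsSymm)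
    (hDu : IsUnit D) :
    C + (fromRows (-(D⁻¹ * C.toCols₁ᵀ)) (0 : Matrix γ α R))ᵀ *
      (fromBlocks D 0 0 0 : Matrix (β ⊕ γ) (β ⊕ γ) R) = fromCols 0 C.toCols₂ := by
  obtain ⟨C₁, C₂, rfl⟩ : ∃ C₁ C₂, C = fromCols C₁ C₂ := ⟨_, _, (fromCols_toCols C).symm⟩
  have hC₁ : (D⁻¹ * C₁ᵀ)ᵀ * D = C₁ := by
    rw [transpose_mul, transpose_transpose, transpose_nonsing_inv, hD.eq,
      nonsing_inv_mul_cancel_right _ _ ((isUnit_iff_isUnit_det D).mp hDu)]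
  rw [toCols₁_fromCols, toCols₂_fromCols, transpose_fromRows, fromCols_mul_fromBlocks,
    transpose_neg, Matrix.neg_mul, hC₁]
  ext i (j | j) <;> simp

section LowerBlockTriangular

variable [Fintype α] [Fintype β] [CommRing R] [DecidableEq α]

theorem Matrix.isUnit_fromBlocks_one_zero [DecidableEq β] (X : Matrix β α R) {V : Matrix β β R}
    (hV : IsUnit V) : IsUnit (fromBlocks (1 : Matrix α α R) 0 X V) := by
  rw [isUnit_iff_isUnit_det, det_fromBlocks_zero₁₂, det_one, one_mul]
  exact (isUnit_iff_isUnit_det V).mp hV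

theorem Matrix.transpose_mul_fromBlocks_zero_mul_fromBlocks_one_zero (A : Matrix α α R)
    (X : Matrix β α R) (V : Matrix β β R) :
    (fromBlocks 1 0 X V)ᵀ * fromBlocks A 0 0 0 * fromBlocks 1 0 X V = fromBlocks A 0 0 0 := by
  rw [fromBlocks_transpose, fromBlocks_multiply, fromBlocks_multiply]
  simp

theorem Matrix.transpose_mul_fromBlocks_mul_fromBlocks_one_zero_zero
    (M₁₁ : Matrix α α R) (M₁₂ : Matrix α β R) (M₂₁ : Matrix β α R) (M₂₂ : Matrix β β R)
    (V : Matrix β β R) :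
    (fromBlocks 1 0 0 V)ᵀ * fromBlocks M₁₁ M₁₂ M₂₁ M₂₂ * fromBlocks 1 0 0 V =
      fromBlocks M₁₁ (M₁₂ * V) (Vᵀ * M₂₁) (Vᵀ * M₂₂ * V) := by
  rw [fromBlocks_transpose, fromBlocks_multiply, fromBlocks_multiply]
  simp

theorem Matrix.transpose_mul_fromBlocks_mul_fromBlocks_one_zero_one [DecidableEq β]
    (B : Matrix α α R) (C : Matrix α β R) {E : Matrix β β R} (hE : E.IsSymm)
    (Y : Matrix β α R) :
    (fromBlocks 1 0 Y 1)ᵀ * fromBlocks B C Cᵀ E * fromBlocks 1 0 Y 1 =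
      fromBlocks (B + Yᵀ * Cᵀ + (C + Yᵀ * E) * Y) (C + Yᵀ * E) (C + Yᵀ * E)ᵀ E := by
  rw [fromBlocks_transpose, fromBlocks_multiply, fromBlocks_multiply]
  simp [Matrix.add_mul, transpose_add, transpose_mul, hE.eq]

theorem Matrix.exists_isUnit_transpose_mul_mul_eq_fromBlocks_of_isSymm [DecidableEq β]
    [Fintype γ] [DecidableEq γ] (A : Matrix α α R) {M : Matrix (α ⊕ (β ⊕ γ)) (α ⊕ (β ⊕ γ)) R}
    (hM : M.IsSymm) {V : Matrix (β ⊕ γ) (β ⊕ γ) R} (hV : IsUnit V) {D : Matrix β β R}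
    (hD : D.IsSymm) (hDu : IsUnit D) (hMV : Vᵀ * M.toBlocks₂₂ * V = fromBlocks D 0 0 0) :
    ∃ P, IsUnit P ∧ Pᵀ * fromBlocks A 0 0 0 * P = fromBlocks A 0 0 0 ∧
      ∃ B₁ B₂, Pᵀ * M * P = fromBlocks B₁ (fromCols 0 B₂) (fromRows 0 B₂ᵀ) (fromBlocks D 0 0 0) := by
  have hM₂₁ : M.toBlocks₂₁ = M.toBlocks₁₂ᵀ := by
    rw [← fromBlocks_toBlocks M, isSymm_fromBlocks_iff] at hM
    exact hM.2.1.symm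
  set C := M.toBlocks₁₂ * V
  set W : Matrix (α ⊕ (β ⊕ γ)) (α ⊕ (β ⊕ γ)) R := fromBlocks 1 0 0 V
  set T : Matrix (α ⊕ (β ⊕ γ)) (α ⊕ (β ⊕ γ)) R :=
    fromBlocks 1 0 (fromRows (-(D⁻¹ * C.toCols₁ᵀ)) 0) 1
  have hWT (X) : (W * T)ᵀ * X * (W * T) = Tᵀ * (Wᵀ * X * W) * T := by
    simp only [transpose_mul, Matrix.mul_assoc]
  have hWM : Wᵀ * M * W = fromBlocks M.toBlocks₁₁ C Cᵀ (fromBlocks D 0 0 0) := by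
    conv_lhs => rw [← fromBlocks_toBlocks M, hM₂₁]
    rw [transpose_mul_fromBlocks_mul_fromBlocks_one_zero_zero, hMV, ← transpose_mul]
  refine ⟨W * T, (isUnit_fromBlocks_one_zero _ hV).mul (isUnit_fromBlocks_one_zero _ isUnit_one),
    ?_, ?_⟩
  · rw [hWT, transpose_mul_fromBlocks_zero_mul_fromBlocks_one_zero,
      transpose_mul_fromBlocks_zero_mul_fromBlocks_one_zero]
  · have hE : (fromBlocks D 0 0 0 : Matrix (β ⊕ γ) (β ⊕ γ) R).IsSymm :=
      hD.fromBlocks (by simp) isSymm_zero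
    rw [hWT, hWM, transpose_mul_fromBlocks_mul_fromBlocks_one_zero_one _ _ hE,
      add_transpose_mul_fromBlocks_eq_fromCols_zero _ hD hDu, transpose_fromCols, transpose_zero]
    exact ⟨_, _, rfl⟩

end LowerBlockTriangular

theorem stmt_5_general (n : ℕ) (A B : Matrix (Fin n) (Fin n) ℝ)
    (hAs : A.IsSymm) (hBs : B.IsSymm) :
    ∃ (U : Matrix (Fin n) (Fin n) ℝ), IsUnit U ∧
      ∃ (p q r : ℕ) (hpqr : p + q + r = n)
        (e : Fin n ≃ (Fin p ⊕ (Fin q ⊕ Fin r)))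
        (A₁ : Matrix (Fin p) (Fin p) ℝ)
        (B₁ : Matrix (Fin p) (Fin p) ℝ)
        (B₂ : Matrix (Fin p) (Fin r) ℝ)
        (B₃ : Matrix (Fin q) (Fin q) ℝ),
        A₁.IsDiag ∧ IsUnit A₁ ∧ B₃.IsDiag ∧ IsUnit B₃ ∧
        (Uᵀ * A * U).submatrix e.symm e.symm = fromBlocks A₁ 0 0 0 ∧
        (Uᵀ * B * U).submatrix e.symm e.symm =
          fromBlocks B₁ (fromCols 0 B₂) (fromRows 0 B₂ᵀ) (fromBlocks B₃ 0 0 0) := by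
  obtain ⟨p, m, e₁, U₁, A₁, hU₁, hA₁, hA₁u, hA⟩ :=
    hAs.exists_transpose_mul_submatrix_mul_eq_fromBlocks
  set M := U₁ᵀ * B.submatrix e₁.symm e₁.symm * U₁
  have hM : M.IsSymm := (hBs.submatrix _).transpose_mul_mul_s5 U₁
  obtain ⟨q, r, e₂, V, B₃, hV, hB₃, hB₃u, hMV⟩ :=
    (hM.submatrix Sum.inr).exists_transpose_mul_submatrix_mul_eq_fromBlocks
  let f : Fin p ⊕ Fin m ≃ Fin p ⊕ (Fin q ⊕ Fin r) := Equiv.sumCongr (Equiv.refl _) e₂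
  obtain ⟨P, hP, hPA, B₁, B₂, hPB⟩ := exists_isUnit_transpose_mul_mul_eq_fromBlocks_of_isSymm A₁
    (hM.submatrix f.symm) hV hB₃.isSymm hB₃u hMV
  let e := e₁.trans f
  let U := (U₁.submatrix f.symm f.symm * P).submatrix e e
  have hU (X : Matrix (Fin n) (Fin n) ℝ) : (Uᵀ * X * U).submatrix e.symm e.symm =
      Pᵀ * (U₁ᵀ * X.submatrix e₁.symm e₁.symm * U₁).submatrix f.symm f.symm * P := by
    rw [submatrix_transpose_mul_mul_equiv, submatrix_submatrix, Equiv.self_comp_symm,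
      submatrix_id_id, submatrix_transpose_mul_mul_equiv, submatrix_submatrix]
    simp only [transpose_mul, Matrix.mul_assoc]
    rfl
  have hA₁f : (fromBlocks A₁ 0 0 0).submatrix f.symm f.symm = fromBlocks A₁ 0 0 0 := by
    ext (i | i) (j | j) <;> rfl
  refine ⟨U, (isUnit_submatrix_equiv _ _).mpr (((isUnit_submatrix_equiv _ _).mpr hU₁).mul hP),
    p, q, r, by simpa [add_assoc] using (Fintype.card_congr e).symm, e, A₁, B₁, B₂, B₃,
    hA₁, hA₁u, hB₃, hB₃u, ?_, ?_⟩
  · rw [hU, hA, hA₁f, hPA]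
  · rw [hU, hPB]

theorem stmt_5 (n : ℕ) (A B : Matrix (Fin n) (Fin n) ℝ)
    (hAs : A.IsSymm) (hBs : B.IsSymm)
    (hA : ¬ IsUnit A) (hB : ¬ IsUnit B) :
    ∃ (U : Matrix (Fin n) (Fin n) ℝ), IsUnit U ∧
      ∃ (p q r : ℕ) (hpqr : p + q + r = n)
        (e : Fin n ≃ (Fin p ⊕ (Fin q ⊕ Fin r)))
        (A₁ : Matrix (Fin p) (Fin p) ℝ)
        (B₁ : Matrix (Fin p) (Fin p) ℝ)
        (B₂ : Matrix (Fin p) (Fin r) ℝ)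
        (B₃ : Matrix (Fin q) (Fin q) ℝ),
        A₁.IsDiag ∧ IsUnit A₁ ∧ B₃.IsDiag ∧ IsUnit B₃ ∧
        (Uᵀ * A * U).submatrix e.symm e.symm = fromBlocks A₁ 0 0 0 ∧
        (Uᵀ * B * U).submatrix e.symm e.symm =
          fromBlocks B₁ (fromCols 0 B₂) (fromRows 0 B₂ᵀ) (fromBlocks B₃ 0 0 0) :=
  stmt_5_general n A B hAs hBs
end

section
/- Let A₁, ..., Aₘ and B be n×n real symmetric matrices of the form Aᵢ = [[Aᵢ¹, Aᵢ²],[(Aᵢ²)ᵀ, Aᵢ³]] and B = diag(I_p, 0_{n−p}), where each Aᵢ¹ is p×p (p < n), each Aᵢ³ is diagonal, and A₁³ is nonsingular. Then A₁, ..., Aₘ, B are simultaneously diagonalizable via congruence if and only if (1) Aᵢ² = A₁²(A₁³)⁻¹Aᵢ³ for i = 2, ..., m, and (2) the matrices Aᵢ¹ − Aᵢ²(A₁³)⁻¹(A₁²)ᵀ, i = 1, ..., m, pairwise commute. -/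
/-!
If `Pᵀ Aᵢ P` and `Pᵀ B P` are diagonal, let `E⁺` be the diagonal pseudo-inverse of `Pᵀ B P`. Then
`G = P E⁺ Pᵀ` is a symmetric matrix with `BGB = B`, `GBG = G`, and `X G Y = Y G X` for all `X, Y`
among the `Aᵢ` and `B`. For `B = diag(I, 0)` the first two identities force
`G = [[I, g], [gᵀ, gᵀ g]]`. From `B G Aᵢ = Aᵢ G B` we get `Aᵢ² = -g Aᵢ³`, hence `g = -A₁²(A₁³)⁻¹`
and (1). The top-left block of `Aᵢ G Aⱼ` is then `SᵢSⱼ`, where `Sᵢ = Aᵢ¹ - Aᵢ²(A₁³)⁻¹(A₁²)ᵀ`,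
which gives (2).

Conversely, under (1) the congruence by `[[I, 0], [gᵀ, I]]` fixes `B` and takes `Aᵢ` to
`diag(Sᵢ, Aᵢ³)`. The `Sᵢ` are symmetric and commute, so one orthogonal matrix diagonalizes all of
them at once.
-/

open Function Matrix Module.End

theorem LinearMap.IsSymmetric.exists_orthonormalBasis_apply_eq_smul_of_pairwise_commute
    {𝕜 E ι : Type*} [RCLike 𝕜] [NormedAddCommGroup E] [InnerProductSpace 𝕜 E]
    [FiniteDimensional 𝕜 E] {κ : Type*} [Fintype κ] (hκ : Module.finrank 𝕜 E = Fintype.card κ)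
    {T : ι → Module.End 𝕜 E} (hT : ∀ i, (T i).IsSymmetric) (hC : Pairwise (Commute on T)) :
    ∃ (b : OrthonormalBasis κ 𝕜 E) (μ : κ → ι → 𝕜), ∀ a i, T i (b a) = μ a i • b a := by
  classical
  let V : (ι → 𝕜) → Submodule 𝕜 E := fun χ ↦ ⨅ i, eigenspace (T i) (χ i)
  have hV : DirectSum.IsInternal V := directSum_isInternal_of_pairwise_commute hT hC
  have : Fintype {χ // V χ ≠ ⊥} := hV.submodule_iSupIndep.fintypeNeBotOfFiniteDimensional
  -- only the finitely many nonzero joint eigenspaces can index an orthonormal basis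
  have hV' : DirectSum.IsInternal fun χ : {χ // V χ ≠ ⊥} ↦ V χ := by
    rw [DirectSum.isInternal_submodule_iff_iSupIndep_and_iSup_eq_top] at hV ⊢
    exact ⟨hV.1.comp Subtype.val_injective, by rw [iSup_ne_bot_subtype, hV.2]⟩
  have horth : OrthogonalFamily 𝕜 (fun χ : {χ // V χ ≠ ⊥} ↦ V χ) fun χ ↦ (V χ).subtypeₗᵢ :=
    (orthogonalFamily_iInf_eigenspaces hT).comp Subtype.val_injective
  let e := Fintype.equivFin κ
  refine ⟨(hV'.subordinateOrthonormalBasis hκ horth).reindex e.symm,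
    fun a ↦ (hV'.subordinateOrthonormalBasisIndex hκ (e a) horth).1, fun a i ↦ ?_⟩
  simpa using mem_eigenspace_iff.mp <|
    (Submodule.mem_iInf _).mp (hV'.subordinateOrthonormalBasis_subordinate hκ (e a) horth) i

namespace Matrix

theorem exists_transpose_mul_self_eq_one_forall_isDiag_of_pairwise_commute
    {n ι : Type*} [Fintype n] [DecidableEq n] {M : ι → Matrix n n ℝ}
    (hM : ∀ i, (M i).IsSymm) (hC : Pairwise fun i j ↦ Commute (M i) (M j)) :
    ∃ Q : Matrix n n ℝ, Qᵀ * Q = 1 ∧ ∀ i, (Qᵀ * M i * Q).IsDiag := by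
  let T : ι → Module.End ℝ (EuclideanSpace ℝ n) := fun i ↦ toLpLinAlgEquiv 2 (M i)
  have hT : ∀ i, (T i).IsSymmetric := fun i ↦
    isSymmetric_toEuclideanLin_iff.mpr (isHermitian_iff_isSymm.mpr (hM i))
  obtain ⟨b, μ, hb⟩ :=
    LinearMap.IsSymmetric.exists_orthonormalBasis_apply_eq_smul_of_pairwise_commute
      finrank_euclideanSpace hT fun i j h ↦ (hC h).map _
  let Q := (EuclideanSpace.basisFun n ℝ).toBasis.toMatrix b
  have hQ : Qᵀ * Q = 1 := by
    simpa [star_eq_conjTranspose] using mem_unitaryGroup_iff'.mp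
      ((EuclideanSpace.basisFun n ℝ).toMatrix_orthonormalBasis_mem_unitary b)
  refine ⟨Q, hQ, fun i ↦ ?_⟩
  have hMQ : M i * Q = Q * diagonal fun a ↦ μ a i := by
    ext k a
    rw [mul_diagonal]
    simpa [T, Q, mul_apply, mulVec, dotProduct, Module.Basis.toMatrix_apply, mul_comm]
      using congrArg (· k) (hb a i)
  rw [Matrix.mul_assoc, hMQ, ← Matrix.mul_assoc, hQ, Matrix.one_mul]
  exact isDiag_diagonal _

section Congruence

variable {n K : Type*} [Fintype n] [DecidableEq n]

theorem IsDiag.mul_mul_comm [CommSemiring K] {X F Y : Matrix n n K} (hX : X.IsDiag)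
    (hF : F.IsDiag) (hY : Y.IsDiag) : X * F * Y = Y * F * X := by
  rw [← hX.diagonal_diag, ← hF.diagonal_diag, ← hY.diagonal_diag]
  simp only [diagonal_mul_diagonal]
  congr 1
  funext k
  ring

theorem mul_mul_mul_eq_of_mul_eq_one [CommSemiring K] {P Q : Matrix n n K} (hPQ : P * Q = 1)
    (X F Y : Matrix n n K) :
    X * (P * F * Pᵀ) * Y = Qᵀ * ((Pᵀ * X * P) * F * (Pᵀ * Y * P)) * Q := by
  have hQP : Qᵀ * Pᵀ = 1 := by rw [← transpose_mul, hPQ, transpose_one]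
  calc X * (P * F * Pᵀ) * Y = (Qᵀ * Pᵀ) * X * (P * F * Pᵀ) * Y * (P * Q) := by
        rw [hQP, hPQ, Matrix.one_mul, Matrix.mul_one]
    _ = _ := by simp only [Matrix.mul_assoc]

theorem mul_mul_comm_of_isDiag_congr [CommSemiring K] {P F X Y : Matrix n n K} (hP : IsUnit P)
    (hF : F.IsDiag) (hX : (Pᵀ * X * P).IsDiag) (hY : (Pᵀ * Y * P).IsDiag) :
    X * (P * F * Pᵀ) * Y = Y * (P * F * Pᵀ) * X := by
  obtain ⟨Q, hPQ⟩ := hP.exists_right_inv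
  rw [mul_mul_mul_eq_of_mul_eq_one hPQ, mul_mul_mul_eq_of_mul_eq_one hPQ, hX.mul_mul_comm hF hY]

theorem IsDiag.exists_isDiag_gInverse [DivisionRing K] {E : Matrix n n K} (hE : E.IsDiag) :
    ∃ F : Matrix n n K, F.IsDiag ∧ E * F * E = E ∧ F * E * F = F := by
  obtain ⟨d, rfl⟩ : ∃ d, E = diagonal d := ⟨_, hE.diagonal_diag.symm⟩
  refine ⟨diagonal d⁻¹, isDiag_diagonal _, ?_, ?_⟩ <;> simp only [diagonal_mul_diagonal]
  · simp only [Pi.inv_apply, mul_inv_mul_cancel]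
  · simpa using fun i ↦ mul_inv_mul_cancel (d i)⁻¹

theorem exists_symm_gInverse_of_isDiag_congr [Field K] {ι : Type*} {P B : Matrix n n K}
    {A : ι → Matrix n n K} (hP : IsUnit P) (hB : (Pᵀ * B * P).IsDiag)
    (hA : ∀ i, (Pᵀ * A i * P).IsDiag) :
    ∃ G : Matrix n n K, Gᵀ = G ∧ B * G * B = B ∧ G * B * G = G ∧
      (∀ i, B * G * A i = A i * G * B) ∧ ∀ i j, A i * G * A j = A j * G * A i := by
  obtain ⟨F, hF, hBFB, hFBF⟩ := hB.exists_isDiag_gInverse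
  obtain ⟨Q, hPQ⟩ := hP.exists_right_inv
  refine ⟨P * F * Pᵀ, ?_, ?_, ?_, fun i ↦ mul_mul_comm_of_isDiag_congr hP hF hB (hA i),
    fun i j ↦ mul_mul_comm_of_isDiag_congr hP hF (hA i) (hA j)⟩
  · rw [transpose_mul, transpose_mul, transpose_transpose, hF.isSymm.eq, Matrix.mul_assoc]
  · have hQP : Qᵀ * Pᵀ = 1 := by rw [← transpose_mul, hPQ, transpose_one]
    rw [mul_mul_mul_eq_of_mul_eq_one hPQ, hBFB]
    simp only [← Matrix.mul_assoc, hQP, Matrix.one_mul]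
    rw [Matrix.mul_assoc, hPQ, Matrix.mul_one]
  · calc P * F * Pᵀ * B * (P * F * Pᵀ) = P * (F * (Pᵀ * B * P) * F) * Pᵀ := by
          simp only [Matrix.mul_assoc]
      _ = P * F * Pᵀ := by rw [hFBF]

end Congruence

section Blocks

variable {p s K : Type*} [Fintype p] [Fintype s] [CommRing K]

theorem transpose_fromBlocks_mul_fromBlocks_mul [DecidableEq s] (Q A1 : Matrix p p K)
    (A3 : Matrix s s K) :
    (fromBlocks Q 0 0 1)ᵀ * fromBlocks A1 0 0 A3 * fromBlocks Q 0 0 1 =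
      fromBlocks (Qᵀ * A1 * Q) 0 0 A3 := by
  simp [fromBlocks_transpose, fromBlocks_multiply]

variable [DecidableEq p]

theorem eq_fromBlocks_of_symm_gInverse {G : Matrix (p ⊕ s) (p ⊕ s) K} (hG : Gᵀ = G)
    (hBGB : fromBlocks 1 0 0 0 * G * fromBlocks 1 0 0 0 = fromBlocks 1 0 0 0)
    (hGBG : G * fromBlocks 1 0 0 0 * G = G) :
    ∃ g, G = fromBlocks 1 g gᵀ (gᵀ * g) := by
  rw [← fromBlocks_toBlocks G] at hG hBGB hGBG ⊢
  simp only [fromBlocks_transpose, fromBlocks_multiply, fromBlocks_inj, Matrix.zero_mul,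
    Matrix.mul_zero, Matrix.one_mul, Matrix.mul_one, add_zero, and_true] at hG hBGB hGBG
  exact ⟨_, by rw [← hGBG.2.2.2, ← hG.2.2.1, hBGB]⟩

theorem add_mul_eq_zero_of_fromBlocks_mul_mul_comm {A1 : Matrix p p K} {A2 g : Matrix p s K}
    {A3 : Matrix s s K}
    (h : fromBlocks 1 0 0 0 * fromBlocks 1 g gᵀ (gᵀ * g) * fromBlocks A1 A2 A2ᵀ A3 =
      fromBlocks A1 A2 A2ᵀ A3 * fromBlocks 1 g gᵀ (gᵀ * g) * fromBlocks 1 0 0 0) :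
    A2 + g * A3 = 0 := by
  simp only [fromBlocks_multiply, fromBlocks_inj, Matrix.zero_mul, Matrix.mul_zero,
    Matrix.one_mul, Matrix.mul_one, add_zero] at h
  exact h.2.1

theorem toBlocks₁₁_fromBlocks_mul_mul (A1 A1' : Matrix p p K) (A2 A2' g : Matrix p s K)
    (A3 A3' : Matrix s s K) :
    (fromBlocks A1 A2 A2ᵀ A3 * fromBlocks 1 g gᵀ (gᵀ * g) * fromBlocks A1' A2' A2'ᵀ A3').toBlocks₁₁
      = (A1 + A2 * gᵀ) * (A1' + g * A2'ᵀ) := by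
  simp only [fromBlocks_multiply, toBlocks_fromBlocks₁₁, Matrix.mul_one, Matrix.add_mul,
    Matrix.mul_add, Matrix.mul_assoc]

theorem transpose_fromBlocks_mul_mul_of_add_mul_eq_zero [DecidableEq s] {A1 : Matrix p p K}
    {A2 g : Matrix p s K} {A3 : Matrix s s K} (hA3 : A3.IsSymm) (h : A2 + g * A3 = 0) :
    (fromBlocks 1 0 gᵀ 1)ᵀ * fromBlocks A1 A2 A2ᵀ A3 * fromBlocks 1 0 gᵀ 1 =
      fromBlocks (A1 + g * A2ᵀ) 0 0 A3 := by
  have h' : A2ᵀ + A3 * gᵀ = 0 := by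
    rw [← hA3.eq, ← transpose_mul, ← transpose_add, h, transpose_zero]
  simp only [fromBlocks_transpose, fromBlocks_multiply, transpose_one, transpose_transpose,
    transpose_zero, Matrix.one_mul, Matrix.mul_one, Matrix.zero_mul, zero_add, add_zero, h, h',
    Matrix.mul_zero]

end Blocks

section Schur

variable {p s K : Type*} [Fintype s] [DecidableEq s] [CommRing K]

theorem mul_inv_mul_transpose_comm {A2 A2' : Matrix p s K} {C D : Matrix s s K}
    (hC : C.IsSymm) (hD : D.IsSymm) (h : A2' = A2 * C⁻¹ * D) :
    A2 * C⁻¹ * A2'ᵀ = A2' * C⁻¹ * A2ᵀ := by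
  subst h
  rw [transpose_mul, transpose_mul, transpose_nonsing_inv, hC.eq, hD.eq]
  simp only [Matrix.mul_assoc]

theorem isSymm_sub_mul_inv_mul_transpose {A1 : Matrix p p K} {A2 A2' : Matrix p s K}
    {C : Matrix s s K} (hA1 : A1.IsSymm) (hC : C.IsSymm)
    (hcross : A2 * C⁻¹ * A2'ᵀ = A2' * C⁻¹ * A2ᵀ) : (A1 - A2' * C⁻¹ * A2ᵀ).IsSymm := by
  rw [IsSymm, transpose_sub, hA1.eq, transpose_mul, transpose_mul, transpose_transpose,
    transpose_nonsing_inv, hC.eq, ← Matrix.mul_assoc, hcross]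

end Schur

end Matrix

section Conditions

variable {ι p s : Type*} [Fintype p] [Fintype s] [DecidableEq p] [DecidableEq s]

theorem forall_eq_and_commute_of_isDiag_congr {K : Type*} [Field K] {A1 : ι → Matrix p p K}
    {A2 : ι → Matrix p s K} {A3 : ι → Matrix s s K} {i₀ : ι} (hA3 : ∀ i, (A3 i).IsSymm)
    (hu : IsUnit (A3 i₀)) {P : Matrix (p ⊕ s) (p ⊕ s) K} (hP : IsUnit P)
    (hA : ∀ i, (Pᵀ * fromBlocks (A1 i) (A2 i) (A2 i)ᵀ (A3 i) * P).IsDiag)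
    (hB : (Pᵀ * fromBlocks 1 0 0 0 * P).IsDiag) :
    (∀ i, A2 i = A2 i₀ * (A3 i₀)⁻¹ * A3 i) ∧
      ∀ i j, (A1 i - A2 i * (A3 i₀)⁻¹ * (A2 i₀)ᵀ) * (A1 j - A2 j * (A3 i₀)⁻¹ * (A2 i₀)ᵀ) =
        (A1 j - A2 j * (A3 i₀)⁻¹ * (A2 i₀)ᵀ) * (A1 i - A2 i * (A3 i₀)⁻¹ * (A2 i₀)ᵀ) := by
  obtain ⟨G, hGsymm, hBGB, hGBG, hBGA, hAGA⟩ := exists_symm_gInverse_of_isDiag_congr hP hB hA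
  obtain ⟨g, rfl⟩ := eq_fromBlocks_of_symm_gInverse hGsymm hBGB hGBG
  have hg : ∀ i, g * A3 i = -A2 i := fun i ↦
    eq_neg_of_add_eq_zero_right (add_mul_eq_zero_of_fromBlocks_mul_mul_comm (hBGA i))
  have hg₀ : g = -(A2 i₀ * (A3 i₀)⁻¹) := by
    rw [← mul_nonsing_inv_cancel_right (A3 i₀) g ((isUnit_iff_isUnit_det _).mp hu), hg,
      Matrix.neg_mul]
  have hcond : ∀ i, A2 i = A2 i₀ * (A3 i₀)⁻¹ * A3 i := fun i ↦ by
    rw [← neg_neg (A2 i), ← hg, hg₀, Matrix.neg_mul, neg_neg]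
  refine ⟨hcond, fun i j ↦ ?_⟩
  have hleft : ∀ i, A1 i + A2 i * gᵀ = A1 i - A2 i * (A3 i₀)⁻¹ * (A2 i₀)ᵀ := fun i ↦ by
    rw [hg₀, transpose_neg, transpose_mul, transpose_nonsing_inv, (hA3 i₀).eq, Matrix.mul_neg,
      ← sub_eq_add_neg, Matrix.mul_assoc]
  have hright : ∀ i, A1 i + g * (A2 i)ᵀ = A1 i - A2 i * (A3 i₀)⁻¹ * (A2 i₀)ᵀ := fun i ↦ by
    rw [hg₀, Matrix.neg_mul, ← sub_eq_add_neg,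
      mul_inv_mul_transpose_comm (hA3 i₀) (hA3 i) (hcond i)]
  simpa only [toBlocks₁₁_fromBlocks_mul_mul, hleft, hright] using congrArg toBlocks₁₁ (hAGA i j)

theorem exists_isDiag_congr_of_forall_eq_of_commute {A1 : ι → Matrix p p ℝ}
    {A2 : ι → Matrix p s ℝ} {A3 : ι → Matrix s s ℝ} {i₀ : ι} (hA1 : ∀ i, (A1 i).IsSymm)
    (hA3 : ∀ i, (A3 i).IsDiag) (hcond : ∀ i, A2 i = A2 i₀ * (A3 i₀)⁻¹ * A3 i)
    (hcomm : ∀ i j, (A1 i - A2 i * (A3 i₀)⁻¹ * (A2 i₀)ᵀ) * (A1 j - A2 j * (A3 i₀)⁻¹ * (A2 i₀)ᵀ) =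
        (A1 j - A2 j * (A3 i₀)⁻¹ * (A2 i₀)ᵀ) * (A1 i - A2 i * (A3 i₀)⁻¹ * (A2 i₀)ᵀ)) :
    ∃ P : Matrix (p ⊕ s) (p ⊕ s) ℝ, IsUnit P ∧
      (∀ i, (Pᵀ * fromBlocks (A1 i) (A2 i) (A2 i)ᵀ (A3 i) * P).IsDiag) ∧
      (Pᵀ * fromBlocks 1 0 0 0 * P).IsDiag := by
  set S := fun i ↦ A1 i - A2 i * (A3 i₀)⁻¹ * (A2 i₀)ᵀ
  set g := -(A2 i₀ * (A3 i₀)⁻¹)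
  have hcross : ∀ i, A2 i₀ * (A3 i₀)⁻¹ * (A2 i)ᵀ = A2 i * (A3 i₀)⁻¹ * (A2 i₀)ᵀ := fun i ↦
    mul_inv_mul_transpose_comm (hA3 i₀).isSymm (hA3 i).isSymm (hcond i)
  have hg : ∀ i, A2 i + g * A3 i = 0 := fun i ↦ by
    rw [Matrix.neg_mul, ← sub_eq_add_neg, sub_eq_zero, hcond i]
  have hL : ∀ i, (fromBlocks 1 0 gᵀ 1)ᵀ * fromBlocks (A1 i) (A2 i) (A2 i)ᵀ (A3 i) *
      fromBlocks 1 0 gᵀ 1 = fromBlocks (S i) 0 0 (A3 i) := fun i ↦ by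
    rw [transpose_fromBlocks_mul_mul_of_add_mul_eq_zero (hA3 i).isSymm (hg i), Matrix.neg_mul,
      ← sub_eq_add_neg, hcross]
  have hLB : (fromBlocks 1 0 gᵀ 1)ᵀ * fromBlocks 1 0 0 0 * fromBlocks 1 0 gᵀ 1 =
      (fromBlocks 1 0 0 0 : Matrix (p ⊕ s) (p ⊕ s) ℝ) := by
    simpa using transpose_fromBlocks_mul_mul_of_add_mul_eq_zero (A1 := 1) (A2 := 0) (g := g)
      isSymm_zero (by simp)
  obtain ⟨Q, hQ, hQS⟩ := exists_transpose_mul_self_eq_one_forall_isDiag_of_pairwise_commute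
    (fun i ↦ isSymm_sub_mul_inv_mul_transpose (hA1 i) (hA3 i₀).isSymm (hcross i))
    (fun i j _ ↦ hcomm i j)
  have hconj : ∀ X : Matrix (p ⊕ s) (p ⊕ s) ℝ, (fromBlocks 1 0 gᵀ 1 * fromBlocks Q 0 0 1)ᵀ * X *
      (fromBlocks 1 0 gᵀ 1 * fromBlocks Q 0 0 1) =
      (fromBlocks Q 0 0 1)ᵀ * ((fromBlocks 1 0 gᵀ 1)ᵀ * X * fromBlocks 1 0 gᵀ 1) *
        fromBlocks Q 0 0 1 := fun X ↦ by
    simp only [transpose_mul, Matrix.mul_assoc]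
  refine ⟨fromBlocks 1 0 gᵀ 1 * fromBlocks Q 0 0 1, ?_, fun i ↦ ?_, ?_⟩
  · simp only [isUnit_iff_isUnit_det, det_mul, det_fromBlocks_zero₁₂, det_one, mul_one, one_mul]
    exact isUnit_det_of_left_inverse hQ
  · rw [hconj, hL, transpose_fromBlocks_mul_fromBlocks_mul]
    exact (hQS i).fromBlocks (hA3 i)
  · rw [hconj, hLB, transpose_fromBlocks_mul_fromBlocks_mul, Matrix.mul_one, hQ]
    exact isDiag_one.fromBlocks isDiag_zero

end Conditions

theorem stmt_12_general (p s m : ℕ)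
    (A1 : Fin (m + 1) → Matrix (Fin p) (Fin p) ℝ)
    (A2 : Fin (m + 1) → Matrix (Fin p) (Fin s) ℝ)
    (A3 : Fin (m + 1) → Matrix (Fin s) (Fin s) ℝ)
    (hA1 : ∀ i, (A1 i).IsSymm)
    (hA3d : ∀ i, (A3 i).IsDiag) (hA3 : IsUnit (A3 0))
    (A : Fin (m + 1) → Matrix (Fin p ⊕ Fin s) (Fin p ⊕ Fin s) ℝ)
    (hA : ∀ i, A i = fromBlocks (A1 i) (A2 i) (A2 i)ᵀ (A3 i))
    (B : Matrix (Fin p ⊕ Fin s) (Fin p ⊕ Fin s) ℝ)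
    (hB : B = fromBlocks 1 0 0 0) :
    (∃ P : Matrix (Fin p ⊕ Fin s) (Fin p ⊕ Fin s) ℝ, IsUnit P ∧
        (∀ i, (Pᵀ * A i * P).IsDiag) ∧ (Pᵀ * B * P).IsDiag) ↔
      ((∀ i : Fin (m + 1), i ≠ 0 → A2 i = A2 0 * (A3 0)⁻¹ * A3 i) ∧
        (∀ i j : Fin (m + 1),
          (A1 i - A2 i * (A3 0)⁻¹ * (A2 0)ᵀ) * (A1 j - A2 j * (A3 0)⁻¹ * (A2 0)ᵀ) =
          (A1 j - A2 j * (A3 0)⁻¹ * (A2 0)ᵀ) * (A1 i - A2 i * (A3 0)⁻¹ * (A2 0)ᵀ))) := by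
  obtain rfl : A = fun i ↦ fromBlocks (A1 i) (A2 i) (A2 i)ᵀ (A3 i) := funext hA
  subst hB
  have hcond : (∀ i, i ≠ 0 → A2 i = A2 0 * (A3 0)⁻¹ * A3 i) ↔
      ∀ i, A2 i = A2 0 * (A3 0)⁻¹ * A3 i := by
    refine ⟨fun h i ↦ ?_, fun h i _ ↦ h i⟩
    rcases eq_or_ne i 0 with rfl | hi
    · rw [nonsing_inv_mul_cancel_right _ _ ((isUnit_iff_isUnit_det _).mp hA3)]
    · exact h i hi
  rw [hcond]
  constructor
  · rintro ⟨P, hP, hAP, hBP⟩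
    exact forall_eq_and_commute_of_isDiag_congr (fun i ↦ (hA3d i).isSymm) hA3 hP hAP hBP
  · rintro ⟨hA2, hcomm⟩
    exact exists_isDiag_congr_of_forall_eq_of_commute hA1 hA3d hA2 hcomm

theorem stmt_12 (p s m : ℕ) (hs : 0 < s)
    (A1 : Fin (m + 1) → Matrix (Fin p) (Fin p) ℝ)
    (A2 : Fin (m + 1) → Matrix (Fin p) (Fin s) ℝ)
    (A3 : Fin (m + 1) → Matrix (Fin s) (Fin s) ℝ)
    (hA1 : ∀ i, (A1 i).IsSymm)
    (hA3d : ∀ i, (A3 i).IsDiag) (hA3 : IsUnit (A3 0))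
    (A : Fin (m + 1) → Matrix (Fin p ⊕ Fin s) (Fin p ⊕ Fin s) ℝ)
    (hA : ∀ i, A i = fromBlocks (A1 i) (A2 i) (A2 i)ᵀ (A3 i))
    (B : Matrix (Fin p ⊕ Fin s) (Fin p ⊕ Fin s) ℝ)
    (hB : B = fromBlocks 1 0 0 0) :
    (∃ P : Matrix (Fin p ⊕ Fin s) (Fin p ⊕ Fin s) ℝ, IsUnit P ∧
        (∀ i, (Pᵀ * A i * P).IsDiag) ∧ (Pᵀ * B * P).IsDiag) ↔
      ((∀ i : Fin (m + 1), i ≠ 0 → A2 i = A2 0 * (A3 0)⁻¹ * A3 i) ∧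
        (∀ i j : Fin (m + 1),
          (A1 i - A2 i * (A3 0)⁻¹ * (A2 0)ᵀ) * (A1 j - A2 j * (A3 0)⁻¹ * (A2 0)ᵀ) =
          (A1 j - A2 j * (A3 0)⁻¹ * (A2 0)ᵀ) * (A1 i - A2 i * (A3 0)⁻¹ * (A2 0)ᵀ))) :=
  stmt_12_general p s m A1 A2 A3 hA1 hA3d hA3 A hA B hB
end

section
/- Let A and B be real symmetric n×n matrices with A invertible, and suppose A⁻¹B = PJP⁻¹ where J = diag(λ₁I_{n₁}, ..., λₖI_{nₖ}) with distinct λᵢ. Then PᵀAP = diag(A₁, ..., Aₖ) and PᵀBP = diag(B₁, ..., Bₖ) are block diagonal with blocks conformal with J, and Bᵢ = λᵢAᵢ for each i. -/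
open Matrix

/-- with `J = diagonal μ` (`μ` constant on blocks, distinct values giving
the block structure), if `A⁻¹B = P J P⁻¹` then `PᵀAP` and `PᵀBP` are block diagonal
conformally with `J`, and on the block of eigenvalue `μ i` one has `Bᵢ = μ i • Aᵢ`. -/
theorem stmt_18 (n : ℕ) (A B P : Matrix (Fin n) (Fin n) ℝ)
    (hAs : A.IsSymm) (hBs : B.IsSymm) (hAinv : IsUnit A) (hP : IsUnit P)
    (μ : Fin n → ℝ)
    (hJ : A⁻¹ * B = P * diagonal μ * P⁻¹) :
    (∀ i j : Fin n, μ i ≠ μ j →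
        (Pᵀ * A * P) i j = 0 ∧ (Pᵀ * B * P) i j = 0) ∧
      (∀ i j : Fin n, μ i = μ j →
        (Pᵀ * B * P) i j = μ i * ((Pᵀ * A * P) i j)) := by
  have hPd : IsUnit P.det := (Matrix.isUnit_iff_isUnit_det P).mp hP
  have hAd : IsUnit A.det := (Matrix.isUnit_iff_isUnit_det A).mp hAinv
  have hPinv : P⁻¹ * P = 1 := nonsing_inv_mul P hPd
  have hB : B = A * (P * diagonal μ * P⁻¹) := by
    have := congrArg (fun X => A * X) hJ
    simpa [← Matrix.mul_assoc, Matrix.mul_nonsing_inv A hAd] using this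
  set M := Pᵀ * A * P with hM
  have hN : Pᵀ * B * P = M * diagonal μ := by
    rw [hB, hM]
    simp only [Matrix.mul_assoc, hPinv, Matrix.mul_one]
  have hMsymm : Mᵀ = M := by
    rw [hM]
    simp [Matrix.transpose_mul, Matrix.mul_assoc, hAs.eq]
  have hNsymm : (Pᵀ * B * P)ᵀ = Pᵀ * B * P := by
    simp [Matrix.transpose_mul, Matrix.mul_assoc, hBs.eq]
  have key : ∀ i j, M i j * μ j = M i j * μ i := by
    intro i j
    have h1 : (Pᵀ * B * P) i j = M i j * μ j := by rw [hN, mul_diagonal]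
    have h2 : (Pᵀ * B * P) j i = M j i * μ i := by rw [hN, mul_diagonal]
    have h3 : (Pᵀ * B * P) i j = (Pᵀ * B * P) j i := by
      have := congrFun (congrFun hNsymm j) i
      simpa [transpose_apply] using this
    have h4 : M j i = M i j := by
      have := congrFun (congrFun hMsymm j) i
      simpa [transpose_apply] using this.symm
    rw [← h1, h3, h2, h4]
  constructor
  · intro i j hij
    have hM0 : M i j = 0 := by
      by_contra h
      exact hij ((mul_left_cancel₀ h (key i j)).symm)
    refine ⟨hM0, ?_⟩
    have : (Pᵀ * B * P) i j = M i j * μ j := by rw [hN, mul_diagonal]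
    rw [this, hM0, zero_mul]
  · intro i j hij
    have : (Pᵀ * B * P) i j = M i j * μ j := by rw [hN, mul_diagonal]
    rw [this, ← hij, mul_comm]
end

section
/- Let A₀, A₁, ..., Aₘ be real symmetric n×n matrices that are simultaneously diagonalizable via congruence by an invertible matrix P, with PᵀAᵢP = diag(𝐚ᵢ) for vectors 𝐚ᵢ ∈ ℝⁿ. Then the homogeneous QCQP min { ½ xᵀA₀x : ½ xᵀAᵢx + ½ dᵢ ≤ 0, i = 1, ..., m } has the same optimal value as the linear program min { ½ Σₖ (𝐚₀)ₖ yₖ : ½ Σₖ (𝐚ᵢ)ₖ yₖ + ½ dᵢ ≤ 0 for i = 1, ..., m, and yₖ ≥ 0 for all k }. -/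
open Matrix

/-- if `A₀, A₁, …, Aₘ` are simultaneously diagonalized by the congruence
`P` (with diagonal entries `a i`), then the homogeneous QCQP and the associated linear
program have the same optimal value. -/
theorem stmt_19 (n m : ℕ)
    (A : Fin (m + 1) → Matrix (Fin n) (Fin n) ℝ)
    (hAs : ∀ i, (A i).IsSymm)
    (d : Fin m → ℝ)
    (P : Matrix (Fin n) (Fin n) ℝ) (hP : IsUnit P)
    (a : Fin (m + 1) → Fin n → ℝ)
    (hdiag : ∀ i, Pᵀ * A i * P = diagonal (a i)) :
    sInf {v : ℝ | ∃ x : Fin n → ℝ,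
        (∀ i : Fin m, (1 / 2) * (x ⬝ᵥ (A i.succ).mulVec x) + (1 / 2) * d i ≤ 0) ∧
        v = (1 / 2) * (x ⬝ᵥ (A 0).mulVec x)} =
      sInf {v : ℝ | ∃ y : Fin n → ℝ, (∀ k, 0 ≤ y k) ∧
        (∀ i : Fin m, (1 / 2) * (∑ k, a i.succ k * y k) + (1 / 2) * d i ≤ 0) ∧
        v = (1 / 2) * (∑ k, a 0 k * y k)} := by
  have key : ∀ (i : Fin (m + 1)) (z : Fin n → ℝ),
      (P.mulVec z) ⬝ᵥ (A i).mulVec (P.mulVec z) = ∑ k, a i k * (z k * z k) := by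
    intro i z
    have h1 : z ⬝ᵥ (Pᵀ * A i * P).mulVec z
        = (P.mulVec z) ⬝ᵥ (A i).mulVec (P.mulVec z) := by
      rw [Matrix.mul_assoc, ← mulVec_mulVec, dotProduct_mulVec, vecMul_transpose,
        mulVec_mulVec]
    rw [← h1, hdiag]
    simp only [dotProduct, mulVec_diagonal]
    exact Finset.sum_congr rfl fun k _ => by ring
  have hPdet : IsUnit P.det := (Matrix.isUnit_iff_isUnit_det P).mp hP
  congr 1
  ext v
  simp only [Set.mem_setOf_eq]
  constructor
  · rintro ⟨x, hcon, rfl⟩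
    set z := P⁻¹.mulVec x with hz
    have hx : x = P.mulVec z := by
      rw [hz, mulVec_mulVec, Matrix.mul_nonsing_inv P hPdet, one_mulVec]
    refine ⟨fun k => z k * z k, fun k => mul_self_nonneg _, fun i => ?_, ?_⟩
    · have := hcon i
      rwa [hx, key i.succ z] at this
    · rw [hx, key 0 z]
  · rintro ⟨y, hy, hcon, rfl⟩
    set z : Fin n → ℝ := fun k => Real.sqrt (y k) with hzdef
    have hzz : ∀ k, z k * z k = y k := fun k => Real.mul_self_sqrt (hy k)
    refine ⟨P.mulVec z, fun i => ?_, ?_⟩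
    · have := hcon i
      rw [key i.succ z]
      simpa only [hzz] using this
    · rw [key 0 z]
      simp only [hzz]
end
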